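/- arXiv:1905.11134 — 2 statements merged into one kernel-verified Lean document; each statement's English description precedes it below -/
import Mathlib

section
/- Let G be a graph and let K be the class of all graphs H such that there is no strong homomorphism of G into any induced term subgraph of H. Then K is a graph quasivariety, i.e., K = Mod qId K. -/
open Classical

/-- A graph `(V, E)`: an ambient type `U`, a set `verts ⊆ U` of vertices and an
edge relation `Edge ⊆ verts × verts`. -/
structure GGraph : Type 1 where
  U : Type
  verts : Set U
  Edge : U → U → Prop
  edge_mem : ∀ a b, Edge a b → a ∈ verts ∧ b ∈ verts

namespace GGraph

/-- The induced subgraph of `G` on a set `S`. -/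
def induce (G : GGraph) (S : Set G.U) : GGraph where
  U := G.U
  verts := G.verts ∩ S
  Edge a b := G.Edge a b ∧ a ∈ S ∧ b ∈ S
  edge_mem a b h := ⟨⟨(G.edge_mem a b h.1).1, h.2.1⟩, (G.edge_mem a b h.1).2, h.2.2⟩

/-- The set of vertices reachable from `a` by a directed walk (including `a` itself). -/
def reachSet (G : GGraph) (a : G.U) : Set G.U := {b | Relation.ReflTransGen G.Edge a b}

/-- The subgraph of `G` induced by the set of vertices reachable from `a`. -/
def reachSub (G : GGraph) (a : G.U) : GGraph := G.induce (G.reachSet a)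

/-- A graph is undirected if its edge relation is symmetric. -/
def Undirected (G : GGraph) : Prop := ∀ a b, G.Edge a b → G.Edge b a

end GGraph

/-- A homomorphism of graphs: maps vertices to vertices and edges to edges. -/
def IsHom (G H : GGraph) (f : G.U → H.U) : Prop :=
  (∀ a ∈ G.verts, f a ∈ H.verts) ∧ ∀ a b, G.Edge a b → H.Edge (f a) (f b)

/-- A strong homomorphism: additionally maps non-edges to non-edges. -/
def IsStrongHom (G H : GGraph) (f : G.U → H.U) : Prop :=
  IsHom G H f ∧ ∀ a ∈ G.verts, ∀ b ∈ G.verts, ¬ G.Edge a b → ¬ H.Edge (f a) (f b)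

/-- Isomorphism of graphs. -/
def IsIsomorphic (G H : GGraph) : Prop :=
  ∃ f : G.U → H.U, Set.BijOn f G.verts H.verts ∧
    ∀ a ∈ G.verts, ∀ b ∈ G.verts, (G.Edge a b ↔ H.Edge (f a) (f b))

/-- Terms of type (2,0) over a variable set `X`: variables, the constant `∞`,
and a binary operation (juxtaposition). -/
inductive GTerm (X : Type) : Type
  | var : X → GTerm X
  | inf : GTerm X
  | app : GTerm X → GTerm X → GTerm X

namespace GTerm

/-- The set of variables occurring in a term. -/
def vars {X : Type} : GTerm X → Set X
  | var x => {x}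
  | inf => ∅
  | app t₁ t₂ => t₁.vars ∪ t₂.vars

/-- A term is nontrivial if it contains no occurrence of `∞`. -/
def Nontrivial {X : Type} : GTerm X → Prop
  | var _ => True
  | inf => False
  | app t₁ t₂ => t₁.Nontrivial ∧ t₂.Nontrivial

/-- The leftmost variable of a term (`none` for the bare constant `∞` on the left). -/
def leftVar {X : Type} : GTerm X → Option X
  | var x => some x
  | inf => none
  | app t₁ _ => t₁.leftVar

/-- The edge set of the term graph `G(t)`. -/
def edges {X : Type} : GTerm X → Set (X × X)
  | var _ => ∅
  | inf => ∅
  | app t₁ t₂ =>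
      t₁.edges ∪ t₂.edges ∪
        {p | ∃ x y, t₁.leftVar = some x ∧ t₂.leftVar = some y ∧ p = (x, y)}

theorem vars_finite {X : Type} (t : GTerm X) : t.vars.Finite := by
  induction t with
  | var x => simpa [vars] using Set.finite_singleton x
  | inf => simpa [vars] using Set.finite_empty
  | app t₁ t₂ ih₁ ih₂ => simpa [vars] using ih₁.union ih₂

end GTerm

/-- The term graph `G(t)` of a term `t`: vertices are the variables of `t`. -/
def termGraph {X : Type} (t : GTerm X) : GGraph where
  U := X
  verts := t.vars
  Edge a b := (a, b) ∈ t.edges ∧ a ∈ t.vars ∧ b ∈ t.vars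
  edge_mem a b h := ⟨h.2.1, h.2.2⟩

/-- Evaluation of a term in the graph algebra `A(G)`; `none` plays the role of `∞`:
`x · y = x` if `(x,y)` is an edge, and `∞` otherwise. -/
noncomputable def GGraph.eval (G : GGraph) {X : Type} (h : X → Option G.U) :
    GTerm X → Option G.U
  | .var x => h x
  | .inf => none
  | .app t₁ t₂ =>
      match G.eval h t₁, G.eval h t₂ with
      | some a, some b => if G.Edge a b then some a else none
      | _, _ => none

/-- Identities: pairs of terms. -/
abbrev GId (X : Type) := GTerm X × GTerm X

/-- An assignment takes values in `V(G) ∪ {∞}`. -/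
def GGraph.Assign (G : GGraph) {X : Type} (h : X → Option G.U) : Prop :=
  ∀ x a, h x = some a → a ∈ G.verts

/-- The assignment `h` makes the identity `e` true in `A(G)`. -/
def GGraph.SatIdWith (G : GGraph) {X : Type} (h : X → Option G.U) (e : GId X) : Prop :=
  G.eval h e.1 = G.eval h e.2

/-- `G` satisfies the identity `e`. -/
def GGraph.SatId (G : GGraph) {X : Type} (e : GId X) : Prop :=
  ∀ h : X → Option G.U, G.Assign h → G.SatIdWith h e

/-- An implication (quasi-identity) over the standard countably infinite
variable set `ℕ`: a finite set of identities (the premise) and an identity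
(the consequence). -/
structure Imp : Type where
  prem : Set (GId ℕ)
  concl : GId ℕ
  prem_fin : prem.Finite

/-- `G` satisfies the implication `imp`. -/
def GGraph.SatImp (G : GGraph) (imp : Imp) : Prop :=
  ∀ h : ℕ → Option G.U, G.Assign h →
    (∀ e ∈ imp.prem, G.SatIdWith h e) → G.SatIdWith h imp.concl

/-- The implications satisfied by every member of a class `K` of graphs. -/
def qId (K : Set GGraph) : Set Imp := {imp | ∀ G ∈ K, G.SatImp imp}

/-- The class of graphs satisfying every implication of `Sg`. -/
def ModI (Sg : Set Imp) : Set GGraph := {G | ∀ imp ∈ Sg, G.SatImp imp}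

/-- The finite members of `ModI Sg`. -/
def ModIf (Sg : Set Imp) : Set GGraph := {G | G ∈ ModI Sg ∧ G.verts.Finite}

/-- The pointed graph `G^⊥`: a new vertex `⊥ = none` with edges from `⊥` to all
vertices, including a loop at `⊥`. -/
def GGraph.pointed (G : GGraph) : GGraph where
  U := Option G.U
  verts := insert none (some '' G.verts)
  Edge a b := b ∈ insert none (some '' G.verts) ∧
    (a = none ∨ ∃ u v, a = some u ∧ b = some v ∧ G.Edge u v)
  edge_mem a b h := by
    refine ⟨?_, h.1⟩
    rcases h.2 with rfl | ⟨u, v, rfl, rfl, huv⟩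
    · exact Set.mem_insert _ _
    · exact Set.mem_insert_of_mem _ ⟨u, (G.edge_mem u v huv).1, rfl⟩

/-- Direct product of a family of graphs (componentwise edges). -/
def gProd {I : Type} (G : I → GGraph) : GGraph where
  U := (i : I) → (G i).U
  verts := {a | ∀ i, a i ∈ (G i).verts}
  Edge a b := ∀ i, (G i).Edge (a i) (b i)
  edge_mem a b h :=
    ⟨fun i => ((G i).edge_mem _ _ (h i)).1, fun i => ((G i).edge_mem _ _ (h i)).2⟩

/-- The pointed product `∏ i, (G i)^⊥` of a family of graphs. -/
def pointedProd {I : Type} (G : I → GGraph) : GGraph := gProd fun i => (G i).pointed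

/-- `W` is a strong pointed subproduct of the family `G`:
(1) `W` is an induced subgraph of the pointed product;
(2) every vertex has nonempty support;
(3) for every vertex `a` and every `k` in the support of `a`, the projection `p k`
restricted to `reach_W(a)` is a strong homomorphism into `G k`. -/
def IsSPSofFam {I : Type} (G : I → GGraph) (W : GGraph) : Prop :=
  ∃ S : Set (pointedProd G).U,
    W = (pointedProd G).induce S ∧
    (∀ a ∈ ((pointedProd G).induce S).verts, ∃ i, a i ≠ none) ∧
    (∀ a ∈ ((pointedProd G).induce S).verts, ∀ k : I, a k ≠ none →
      (∀ b ∈ (((pointedProd G).induce S).reachSub a).verts, b k ≠ none) ∧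
      (∀ b ∈ (((pointedProd G).induce S).reachSub a).verts,
        ∀ u, b k = some u → u ∈ (G k).verts) ∧
      (∀ b ∈ (((pointedProd G).induce S).reachSub a).verts,
       ∀ c ∈ (((pointedProd G).induce S).reachSub a).verts,
        ∀ u v, b k = some u → c k = some v →
          ((((pointedProd G).induce S).reachSub a).Edge b c ↔ (G k).Edge u v)))

/-- The class of all strong pointed subproducts of families of members of `K`. -/
def Psps (K : Set GGraph) : Set GGraph :=
  {W | ∃ (I : Type) (G : I → GGraph), (∀ i, G i ∈ K) ∧ IsSPSofFam G W}

/-- The finite members of `Psps K`. -/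
def PspsFin (K : Set GGraph) : Set GGraph := {W | W ∈ Psps K ∧ W.verts.Finite}

/-- Isomorphic copies of members of a class of graphs. -/
def Icl (C : Set GGraph) : Set GGraph := {W | ∃ V ∈ C, IsIsomorphic V W}

/-- `W` is the union of a directed family of members of `C` (the members of the
family are induced subgraphs of a common member, pairwise). -/
def IsDirUnionOf (W : GGraph) (C : Set GGraph) : Prop :=
  ∃ (ι : Type) (V : ι → Set W.U) (E : ι → W.U → W.U → Prop)
    (hmem : ∀ i, ∀ a b, E i a b → a ∈ V i ∧ b ∈ V i),
    (∀ i, GGraph.mk W.U (V i) (E i) (hmem i) ∈ C) ∧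
    (∀ i j, ∃ k,
      (V i ⊆ V k ∧ ∀ a b, E i a b ↔ E k a b ∧ a ∈ V i ∧ b ∈ V i) ∧
      (V j ⊆ V k ∧ ∀ a b, E j a b ↔ E k a b ∧ a ∈ V j ∧ b ∈ V j)) ∧
    W.verts = ⋃ i, V i ∧
    ∀ a b, W.Edge a b ↔ ∃ i, E i a b

/-- The class of all directed unions of members of `C`. -/
def DCl (C : Set GGraph) : Set GGraph := {W | IsDirUnionOf W C}

/-- Condition (a) of Proposition `IPK-ab`. -/
def CondA (K : Set GGraph) (W : GGraph) : Prop :=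
  ∀ a ∈ W.verts, ∃ Ga ∈ K, ∃ φ : W.U → Ga.U, IsStrongHom (W.reachSub a) Ga φ

/-- Condition (b) of Proposition `IPK-ab`. -/
def CondB (K : Set GGraph) (W : GGraph) : Prop :=
  ∀ a ∈ W.verts, ∀ a' ∈ W.verts, a ≠ a' → W.reachSet a = W.reachSet a' →
    ∃ Gp ∈ K, ∃ φ : W.U → Gp.U, IsStrongHom (W.reachSub a) Gp φ ∧ φ a ≠ φ a'

/-- The identities `x_a x_b ≈ x_a` for edges `(a,b)` of `G` (variables are the
vertices of `G`). -/
def GammaE (G : GGraph) : Set (GId G.U) :=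
  {e | ∃ a b, G.Edge a b ∧ e = (GTerm.app (GTerm.var a) (GTerm.var b), GTerm.var a)}

/-- The identities `x_a x_b ≈ ∞` for non-edges `(a,b)` of `G`. -/
def GammaN (G : GGraph) : Set (GId G.U) :=
  {e | ∃ a b, a ∈ G.verts ∧ b ∈ G.verts ∧ ¬ G.Edge a b ∧
    e = (GTerm.app (GTerm.var a) (GTerm.var b), GTerm.inf)}

/-- `Σ(G) = Γ_e(G) ∪ Γ_n(G)`. -/
def SigmaIds (G : GGraph) : Set (GId G.U) := GammaE G ∪ GammaN G

theorem SigmaIds_finite (G : GGraph) (hfin : G.verts.Finite) : (SigmaIds G).Finite := by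
  classical
  have hsub : SigmaIds G ⊆
      (fun p : G.U × G.U =>
        if G.Edge p.1 p.2 then
          (GTerm.app (GTerm.var p.1) (GTerm.var p.2), GTerm.var p.1)
        else (GTerm.app (GTerm.var p.1) (GTerm.var p.2), GTerm.inf)) ''
        (G.verts ×ˢ G.verts) := by
    rintro e (⟨a, b, hab, rfl⟩ | ⟨a, b, ha, hb, hnab, rfl⟩)
    · exact ⟨(a, b), Set.mk_mem_prod (G.edge_mem a b hab).1 (G.edge_mem a b hab).2,
        by simp [hab]⟩
    · exact ⟨(a, b), Set.mk_mem_prod ha hb, by simp [hnab]⟩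
  exact ((hfin.prod hfin).image _).subset hsub

/-- A term graph: a finite graph with a vertex from which all vertices are
reachable (equivalently, a graph isomorphic to `G(t)` for a nontrivial term `t`). -/
def IsTermGraph (G : GGraph) : Prop :=
  G.verts.Finite ∧ ∃ a ∈ G.verts, G.verts ⊆ G.reachSet a


/-!
If `H ∉ K`, there are an induced term subgraph `T` of `H`, with root `r`, and a strong
homomorphism `G → T`. Code the vertices of `T` injectively as variables and consider the
implication `Σ(T) → x_r ≈ ∞`, where `Σ(T)` is the diagram of `T`. Under `Σ(T)` the edge
identities `x_a x_b ≈ x_a` propagate definedness along edges, so an assignment satisfying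
`Σ(T)` with `x_r` defined is defined on all of `T`, and is then a strong homomorphism of `T`
onto an induced term subgraph; composing, `G` maps strongly into it. Hence every member of `K`
satisfies the implication, while `H` refutes it by the inclusion `T ⊆ H`.
-/

namespace GTerm

variable {X Y : Type}

def rename (g : X → Y) : GTerm X → GTerm Y
  | var x => var (g x)
  | inf => inf
  | app t₁ t₂ => app (t₁.rename g) (t₂.rename g)

end GTerm

section Hom

variable {G T H : GGraph}

theorem isStrongHom_iff_edge_iff {φ : T.U → H.U} :
    IsStrongHom T H φ ↔ (∀ a ∈ T.verts, φ a ∈ H.verts) ∧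
      ∀ a ∈ T.verts, ∀ b ∈ T.verts, (T.Edge a b ↔ H.Edge (φ a) (φ b)) := by
  refine ⟨fun ⟨⟨hv, he⟩, hn⟩ => ⟨hv, fun a ha b hb => ⟨he a b, not_imp_not.mp (hn a ha b hb)⟩⟩,
    fun ⟨hv, he⟩ => ⟨⟨hv, fun a b hab => ?_⟩, fun a ha b hb => mt (he a ha b hb).mpr⟩⟩
  obtain ⟨ha, hb⟩ := T.edge_mem a b hab
  exact (he a ha b hb).mp hab

theorem IsStrongHom.comp {f : G.U → T.U} {φ : T.U → H.U} (hφ : IsStrongHom T H φ)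
    (hf : IsStrongHom G T f) : IsStrongHom G H (φ ∘ f) :=
  ⟨⟨fun a ha => hφ.1.1 _ (hf.1.1 a ha), fun a b hab => hφ.1.2 _ _ (hf.1.2 a b hab)⟩,
    fun a ha b hb hab => hφ.2 _ (hf.1.1 a ha) _ (hf.1.1 b hb) (hf.2 a ha b hb hab)⟩

theorem isStrongHom_induce_id (S : Set H.U) : IsStrongHom (H.induce S) H id :=
  ⟨⟨fun _ ha => ha.1, fun _ _ hab => hab.1⟩, fun _ ha _ hb hab h => hab ⟨h, ha.2, hb.2⟩⟩

theorem IsStrongHom.induce_image {φ : T.U → H.U} (hφ : IsStrongHom T H φ) :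
    IsStrongHom T (H.induce (φ '' T.verts)) φ :=
  ⟨⟨fun a ha => ⟨hφ.1.1 a ha, a, ha, rfl⟩, fun a b hab =>
      ⟨hφ.1.2 a b hab, ⟨a, (T.edge_mem a b hab).1, rfl⟩, b, (T.edge_mem a b hab).2, rfl⟩⟩,
    fun a ha b hb hab h => hφ.2 a ha b hb hab h.1⟩

theorem IsTermGraph.of_isHom {W : GGraph} {φ : T.U → W.U} (hT : IsTermGraph T)
    (hφ : IsHom T W φ) (hW : W.verts ⊆ φ '' T.verts) : IsTermGraph W := by
  obtain ⟨hfin, r, hr, hreach⟩ := hT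
  refine ⟨(hfin.image φ).subset hW, φ r, hφ.1 r hr, ?_⟩
  rintro _ hw
  obtain ⟨a, ha, rfl⟩ := hW hw
  exact (hreach ha).lift φ hφ.2

theorem exists_induce_isTermGraph_of_isStrongHom {f : G.U → T.U} {φ : T.U → H.U}
    (hT : IsTermGraph T) (hf : IsStrongHom G T f) (hφ : IsStrongHom T H φ) :
    ∃ S : Set H.U, IsTermGraph (H.induce S) ∧ ∃ f : G.U → H.U, IsStrongHom G (H.induce S) f :=
  ⟨φ '' T.verts, hT.of_isHom hφ.induce_image.1 Set.inter_subset_right, φ ∘ f,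
    hφ.induce_image.comp hf⟩

end Hom

namespace GGraph

variable (H : GGraph) {X Y : Type}

theorem eval_rename (h : Y → Option H.U) (g : X → Y) (t : GTerm X) :
    H.eval h (t.rename g) = H.eval (h ∘ g) t := by
  induction t with
  | var x => rfl
  | inf => rfl
  | app t₁ t₂ ih₁ ih₂ => simp only [GTerm.rename, eval, ih₁, ih₂]

theorem satIdWith_rename (h : Y → Option H.U) (g : X → Y) (e : GId X) :
    H.SatIdWith h (Prod.map (GTerm.rename g) (GTerm.rename g) e) ↔ H.SatIdWith (h ∘ g) e := by
  simp only [SatIdWith, Prod.map_fst, Prod.map_snd, eval_rename]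

theorem eval_app_var_var {h : X → Option H.U} {x y : X} {u v : H.U} (hx : h x = some u)
    (hy : h y = some v) :
    H.eval h (.app (.var x) (.var y)) = if H.Edge u v then some u else none := by
  simp only [eval, hx, hy]

theorem eval_app_var_var_of_right_eq_none {h : X → Option H.U} {x y : X} (hy : h y = none) :
    H.eval h (.app (.var x) (.var y)) = none := by
  simp only [eval, hy]
  split <;> simp_all

end GGraph

section Diagram

variable {T H : GGraph}

theorem forall_satIdWith_sigmaIds_iff {k : T.U → Option H.U} {φ : T.U → H.U}
    (hk : ∀ a ∈ T.verts, k a = some (φ a)) :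
    (∀ e ∈ SigmaIds T, H.SatIdWith k e) ↔
      ∀ a ∈ T.verts, ∀ b ∈ T.verts, (T.Edge a b ↔ H.Edge (φ a) (φ b)) := by
  have hval : ∀ a ∈ T.verts, ∀ b ∈ T.verts, H.eval k (.app (.var a) (.var b)) =
      if H.Edge (φ a) (φ b) then some (φ a) else none :=
    fun a ha b hb => H.eval_app_var_var (hk a ha) (hk b hb)
  constructor
  · intro hsat a ha b hb
    by_cases hab : T.Edge a b
    · have hid : H.eval k _ = k a := hsat _ (Or.inl ⟨a, b, hab, rfl⟩)
      rw [hval a ha b hb, hk a ha] at hid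
      simpa [hab] using hid
    · have hid : H.eval k _ = none := hsat _ (Or.inr ⟨a, b, ha, hb, hab, rfl⟩)
      rw [hval a ha b hb] at hid
      simpa [hab] using hid
  · rintro hiff e (⟨a, b, hab, rfl⟩ | ⟨a, b, ha, hb, hab, rfl⟩)
    · obtain ⟨ha, hb⟩ := T.edge_mem a b hab
      show H.eval k _ = k a
      rw [hval a ha b hb, if_pos ((hiff a ha b hb).mp hab), hk a ha]
    · show H.eval k _ = none
      rw [hval a ha b hb, if_neg (mt (hiff a ha b hb).mpr hab)]

theorem isSome_of_reflTransGen {k : T.U → Option H.U}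
    (hsat : ∀ e ∈ GammaE T, H.SatIdWith k e) {a b : T.U}
    (hab : Relation.ReflTransGen T.Edge a b) (ha : (k a).isSome) : (k b).isSome := by
  induction hab with
  | refl => exact ha
  | @tail c b _ hcb ih =>
    -- the edge identity `x_c x_b ≈ x_c` forces `x_b` to be defined once `x_c` is
    have hid : H.eval k _ = k c := hsat _ ⟨c, b, hcb, rfl⟩
    by_contra hb
    rw [H.eval_app_var_var_of_right_eq_none (Option.not_isSome_iff_eq_none.mp hb)] at hid
    simp [← hid] at ih

/-- The implication `Σ(T) → x_r ≈ ∞`, with the vertices of `T` coded as variables by `g`. -/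
def diagramImp (T : GGraph) (g : T.U → ℕ) (r : T.U) (hfin : T.verts.Finite) : Imp where
  prem := Prod.map (GTerm.rename g) (GTerm.rename g) '' SigmaIds T
  concl := (.var (g r), .inf)
  prem_fin := (SigmaIds_finite T hfin).image _

theorem satImp_diagramImp {g : T.U → ℕ} {r : T.U} {hfin : T.verts.Finite}
    (hreach : T.verts ⊆ T.reachSet r) (hT : ∀ φ : T.U → H.U, ¬ IsStrongHom T H φ) :
    H.SatImp (diagramImp T g r hfin) := by
  intro h hA hprem
  have hsat : ∀ e ∈ SigmaIds T, H.SatIdWith (h ∘ g) e := fun e he =>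
    (H.satIdWith_rename h g e).mp (hprem _ (Set.mem_image_of_mem _ he))
  show h (g r) = none
  by_contra hr
  have hdef : ∀ a ∈ T.verts, ∃ u, (h ∘ g) a = some u := fun a ha =>
    Option.isSome_iff_exists.mp <| isSome_of_reflTransGen (fun e he => hsat e (Or.inl he))
      (hreach ha) (Option.isSome_iff_ne_none.mpr hr)
  have : Nonempty H.U := ⟨(h (g r)).get (Option.isSome_iff_ne_none.mpr hr)⟩
  choose! φ hφ using hdef
  exact hT φ (isStrongHom_iff_edge_iff.mpr
    ⟨fun a ha => hA _ _ (hφ a ha), (forall_satIdWith_sigmaIds_iff hφ).mp hsat⟩)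

theorem not_satImp_diagramImp {g : T.U → ℕ} {r : T.U} {hfin : T.verts.Finite} {φ : T.U → H.U}
    (hφ : IsStrongHom T H φ) (hg : Set.InjOn g T.verts) (hr : r ∈ T.verts) :
    ¬ H.SatImp (diagramImp T g r hfin) := by
  classical
  have : Nonempty T.U := ⟨r⟩
  let h : ℕ → Option H.U := fun n =>
    if n ∈ g '' T.verts then some (φ (Function.invFunOn g T.verts n)) else none
  have hk : ∀ a ∈ T.verts, (h ∘ g) a = some (φ a) := fun a ha => by
    simp only [Function.comp, h, if_pos (Set.mem_image_of_mem g ha), hg.leftInvOn_invFunOn ha]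
  have hA : H.Assign h := by
    intro n u hn
    simp only [h] at hn
    split_ifs at hn with hmem
    cases hn
    exact hφ.1.1 _ (Function.invFunOn_mem hmem)
  have hprem : ∀ e ∈ (diagramImp T g r hfin).prem, H.SatIdWith h e := by
    rintro _ ⟨e, he, rfl⟩
    exact (H.satIdWith_rename h g e).mpr
      ((forall_satIdWith_sigmaIds_iff hk).mpr (isStrongHom_iff_edge_iff.mp hφ).2 e he)
  intro hsat
  exact Option.some_ne_none _ ((hk r hr).symm.trans (hsat h hA hprem))

end Diagram

/-- for any graph `G`, the class of all graphs `H` admitting no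
strong homomorphism of `G` into any induced term subgraph of `H` is a graph
quasivariety. -/
theorem statement_16 (G : GGraph) :
    {H : GGraph | ¬ ∃ S : Set H.U, IsTermGraph (H.induce S) ∧
        ∃ f : G.U → H.U, IsStrongHom G (H.induce S) f} =
      ModI (qId {H : GGraph | ¬ ∃ S : Set H.U, IsTermGraph (H.induce S) ∧
        ∃ f : G.U → H.U, IsStrongHom G (H.induce S) f}) := by
  refine Set.Subset.antisymm (fun H hH _ himp => himp H hH) ?_
  rintro H hH ⟨S, hT, f, hf⟩
  obtain ⟨hfin, r, hr, hreach⟩ := id hT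
  obtain ⟨g, hg⟩ := Set.countable_iff_exists_injOn.mp hfin.countable
  refine not_satImp_diagramImp (isStrongHom_induce_id S) hg hr (hH (diagramImp _ g r hfin) ?_)
  exact fun H' hH' => satImp_diagramImp hreach fun φ hφ =>
    hH' (exists_induce_isTermGraph_of_isStrongHom hT hf hφ)
end

section
/- For n ∈ ℕ let P_n be the directed path with vertex set {0,…,n} and edge set {(i,i+1) : 0 ≤ i ≤ n−1}, and let P_ω be the infinite directed path with vertex set ℕ and edge set {(i,i+1) : i ∈ ℕ}. Let K = {P_n : n ∈ ℕ}. Then P_ω ∈ Mod qId K, but P_ω is not isomorphic to any strong pointed subproduct of a family of members of K (P_ω ∉ I P_sps K). Consequently the inclusion I P_sps K ⊆ Mod qId K can be proper. -/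
open Classical

/-- The directed path `P_n` of length `n`, with vertices `0, …, n` and edges
`(i, i+1)` for `0 ≤ i ≤ n-1`. -/
def Pn (n : ℕ) : GGraph where
  U := ℕ
  verts := {k | k ≤ n}
  Edge a b := b = a + 1 ∧ b ≤ n
  edge_mem a b h := by
    obtain ⟨rfl, h2⟩ := h
    exact ⟨Nat.le_of_succ_le h2, h2⟩

/-- The countably infinite directed path `P_ω`. -/
def Pinf : GGraph where
  U := ℕ
  verts := Set.univ
  Edge a b := b = a + 1
  edge_mem _ _ _ := ⟨Set.mem_univ _, Set.mem_univ _⟩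


/-!
An implication mentions only finitely many variables, so under any assignment into `P_ω` their
values stay below some `N`; on such values the graph algebras of `P_ω` and `P_N` compute the same
terms, and `P_ω` inherits every implication valid in all finite paths. On the other hand `P_ω`
has an infinite directed walk. In a strong pointed subproduct, the whole walk is reachable from
its first vertex `a`, so projecting to a coordinate in the support of `a` maps it to an infinite
walk in a finite path, which does not exist.
-/

theorem GGraph.eval_congr (G : GGraph) {X : Type} {h h' : X → Option G.U} {t : GTerm X}
    (hx : ∀ x ∈ t.vars, h x = h' x) : G.eval h t = G.eval h' t := by
  induction t with
  | var x => exact hx x rfl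
  | inf => rfl
  | app t₁ t₂ ih₁ ih₂ =>
    simp only [GGraph.eval, ih₁ fun x hx' => hx x (Or.inl hx'),
      ih₂ fun x hx' => hx x (Or.inr hx')]

theorem GGraph.exists_mem_vars_of_eval_eq_some (G : GGraph) {X : Type} {h : X → Option G.U}
    {t : GTerm X} {a : G.U} (hev : G.eval h t = some a) : ∃ x ∈ t.vars, h x = some a := by
  induction t with
  | var x => exact ⟨x, rfl, hev⟩
  | inf => cases hev
  | app t₁ t₂ ih₁ _ =>
    rcases e₁ : G.eval h t₁ with _ | a₁ <;> rcases e₂ : G.eval h t₂ with _ | a₂ <;>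
      simp only [GGraph.eval, e₁, e₂, reduceCtorEq] at hev
    split_ifs at hev
    cases hev
    obtain ⟨x, hx, hxa⟩ := ih₁ e₁
    exact ⟨x, Or.inl hx, hxa⟩

theorem Pinf_eval_eq_Pn_eval (N : ℕ) (h : ℕ → Option ℕ) (t : GTerm ℕ)
    (hlt : ∀ x ∈ t.vars, ∀ m : ℕ, h x = some m → m < N) :
    Pinf.eval h t = (Pn N).eval h t := by
  induction t with
  | var x => rfl
  | inf => rfl
  | app t₁ t₂ ih₁ ih₂ =>
    have e₁ := ih₁ fun x hx => hlt x (Or.inl hx)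
    have e₂ := ih₂ fun x hx => hlt x (Or.inr hx)
    simp only [GGraph.eval, ← e₁, ← e₂]
    rcases hv₂ : Pinf.eval h t₂ with _ | b
    · rcases Pinf.eval h t₁ <;> rfl
    obtain ⟨x, hx, hxb⟩ := Pinf.exists_mem_vars_of_eval_eq_some hv₂
    have hb := hlt x (Or.inr hx) b hxb
    rcases Pinf.eval h t₁ with _ | a
    · rfl
    · have hedge : Pinf.Edge a b ↔ (Pn N).Edge a b :=
        ⟨fun hab => ⟨hab, hb.le⟩, And.left⟩
      exact if_congr hedge rfl rfl

def Imp.vars (imp : Imp) : Set ℕ := ⋃ e ∈ insert imp.concl imp.prem, e.1.vars ∪ e.2.vars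

theorem Imp.vars_finite (imp : Imp) : imp.vars.Finite :=
  (imp.prem_fin.insert _).biUnion fun e _ => e.1.vars_finite.union e.2.vars_finite

theorem exists_forall_lt_of_finite {X : Type} {s : Set X} (hs : s.Finite) (h : X → Option ℕ) :
    ∃ N, ∀ x ∈ s, ∀ m, h x = some m → m < N := by
  obtain ⟨B, hB⟩ := (hs.image fun x => (h x).getD 0).bddAbove
  refine ⟨B + 1, fun x hx m hm => Nat.lt_succ_of_le ?_⟩
  simpa [hm] using hB ⟨x, hx, rfl⟩

theorem Pinf_satImp_of_forall_Pn_satImp (imp : Imp) (hPn : ∀ n, (Pn n).SatImp imp) :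
    Pinf.SatImp imp := by
  intro h _ hprem
  obtain ⟨N, hN⟩ := exists_forall_lt_of_finite imp.vars_finite h
  let h' : ℕ → Option ℕ := fun x => if x ∈ imp.vars then h x else none
  have h'_lt : ∀ x (m : ℕ), h' x = some m → m < N := fun x m hm => by
    by_cases hx : x ∈ imp.vars
    · exact hN x hx m ((if_pos hx).symm.trans hm)
    · cases (if_neg hx).symm.trans hm
  have h_eq_h' : ∀ x ∈ imp.vars, h x = h' x := fun x hx => (if_pos hx).symm
  have hsat_iff : ∀ e ∈ insert imp.concl imp.prem,
      Pinf.SatIdWith h e ↔ (Pn N).SatIdWith h' e := fun e he => by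
    have hvars : e.1.vars ∪ e.2.vars ⊆ imp.vars :=
      Set.subset_biUnion_of_mem (u := fun e : GId ℕ => e.1.vars ∪ e.2.vars) he
    have heval : ∀ t : GTerm ℕ, t.vars ⊆ imp.vars → Pinf.eval h t = (Pn N).eval h' t :=
      fun t ht => (Pinf.eval_congr fun x hx => h_eq_h' x (ht hx)).trans
        (Pinf_eval_eq_Pn_eval N h' t fun x _ => h'_lt x)
    unfold GGraph.SatIdWith
    rw [heval e.1 fun x hx => hvars (Or.inl hx),
      heval e.2 fun x hx => hvars (Or.inr hx)]
    exact Iff.rfl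
  refine (hsat_iff _ (Set.mem_insert _ _)).mpr (hPn N h' (fun x m hm => (h'_lt x m hm).le) ?_)
  exact fun e he => (hsat_iff e (Set.mem_insert_of_mem _ he)).mp (hprem e he)

def GGraph.HasInfiniteWalk (G : GGraph) : Prop := ∃ u : ℕ → G.U, ∀ n, G.Edge (u n) (u (n + 1))

theorem Pinf_hasInfiniteWalk : Pinf.HasInfiniteWalk := ⟨id, fun _ => rfl⟩

theorem Pn_not_hasInfiniteWalk (m : ℕ) : ¬ (Pn m).HasInfiniteWalk := by
  rintro ⟨u, hu⟩
  let v : ℕ → ℕ := u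
  have hv_eq : ∀ n, v n = v 0 + n := fun n => by
    induction n with
    | zero => rfl
    | succ n ih => rw [show v (n + 1) = v n + 1 from (hu n).1, ih]; rfl
  have hle : v (m + 1) ≤ m := (hu m).2
  rw [hv_eq] at hle
  omega

theorem IsIsomorphic.hasInfiniteWalk {V W : GGraph} (hVW : IsIsomorphic V W)
    (hW : W.HasInfiniteWalk) : V.HasInfiniteWalk := by
  obtain ⟨f, hbij, hedge⟩ := hVW
  obtain ⟨u, hu⟩ := hW
  have hpre : ∀ n, ∃ v ∈ V.verts, f v = u n := fun n => hbij.surjOn (W.edge_mem _ _ (hu n)).1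
  choose v hv hfv using hpre
  exact ⟨v, fun n => (hedge _ (hv n) _ (hv (n + 1))).mpr (by rw [hfv, hfv]; exact hu n)⟩

theorem IsSPSofFam.exists_hasInfiniteWalk {I : Type} {G : I → GGraph} {W : GGraph}
    (hW : IsSPSofFam G W) (hwalk : W.HasInfiniteWalk) : ∃ k, (G k).HasInfiniteWalk := by
  obtain ⟨S, rfl, hsupp, hstrong⟩ := hW
  obtain ⟨u, hu⟩ := hwalk
  have hreach : ∀ n, u n ∈ (((pointedProd G).induce S).reachSub (u 0)).verts := fun n => by
    refine ⟨(GGraph.edge_mem _ _ _ (hu n)).1, ?_⟩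
    induction n with
    | zero => exact Relation.ReflTransGen.refl
    | succ n ih => exact Relation.ReflTransGen.tail ih (hu n)
  obtain ⟨k, hk⟩ := hsupp (u 0) (hreach 0).1
  obtain ⟨hne, -, hedge⟩ := hstrong (u 0) (hreach 0).1 k hk
  have hsome : ∀ n, ∃ x, u n k = some x := fun n => Option.ne_none_iff_exists'.mp
    (hne _ (hreach n))
  choose x hx using hsome
  exact ⟨k, x, fun n => (hedge _ (hreach n) _ (hreach (n + 1)) _ _ (hx n) (hx (n + 1))).mp
    ⟨hu n, (hreach n).2, (hreach (n + 1)).2⟩⟩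

theorem notMem_Icl_Psps_of_hasInfiniteWalk {K : Set GGraph} {W : GGraph}
    (hK : ∀ G ∈ K, ¬ G.HasInfiniteWalk) (hW : W.HasInfiniteWalk) : W ∉ Icl (Psps K) := by
  rintro ⟨V, ⟨I, G, hGK, hV⟩, hVW⟩
  obtain ⟨k, hk⟩ := hV.exists_hasInfiniteWalk (hVW.hasInfiniteWalk hW)
  exact hK _ (hGK k) hk

/-- `P_ω ∈ Mod qId {P_n : n ∈ ℕ}`, but `P_ω` is not isomorphic to
any strong pointed subproduct of a family of finite paths; hence the inclusion
`I P_sps K ⊆ Mod qId K` can be proper. -/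
theorem statement_18 :
    Pinf ∈ ModI (qId (Set.range Pn)) ∧ Pinf ∉ Icl (Psps (Set.range Pn)) :=
  ⟨fun imp himp => Pinf_satImp_of_forall_Pn_satImp imp fun n => himp _ ⟨n, rfl⟩,
    notMem_Icl_Psps_of_hasInfiniteWalk (by rintro _ ⟨m, rfl⟩; exact Pn_not_hasInfiniteWalk m)
      Pinf_hasInfiniteWalk⟩
end
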